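/- For every α ∈ ℂ, the Bol algebra structure 𝔅₀₆^α on ℂ⁴, given by [e₁,e₂]=e₃, [e₁,e₃]=e₄, [e₂,e₃]=e₄, [e₁,e₂,e₃]=e₄, [e₂,e₃,e₁]=(α−1)e₄, [e₁,e₃,e₂]=α e₄, degenerates to the structure 𝔅₀₄^α given by [e₁,e₂]=e₃, [e₁,e₂,e₃]=e₄, [e₂,e₃,e₁]=(α−1)e₄, [e₁,e₃,e₂]=α e₄. -/
import Mathlib


open Filter Matrix Topology

/-- ℂ⁴ -/
abbrev V4 : Type := Fin 4 → ℂ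

/-- GL₄(ℂ) -/
abbrev GL4 := Matrix.GeneralLinearGroup (Fin 4) ℂ

/-- structure constants of a bilinear map on ℂ⁴: `μ i j` is the value on `(eᵢ, eⱼ)`. -/
abbrev Bil4 := Fin 4 → Fin 4 → V4

/-- structure constants of a trilinear map on ℂ⁴. -/
abbrev Tril4 := Fin 4 → Fin 4 → Fin 4 → V4

/-- standard basis vectors -/
noncomputable def e4 (k : Fin 4) : V4 := Pi.single k (1 : ℂ)

/-- action of `g ∈ GL₄(ℂ)` on a bilinear map: `(g·μ)(x,y) = g μ(g⁻¹x, g⁻¹y)`,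
in structure constants. -/
noncomputable def actBil (g : GL4) (μ : Bil4) : Bil4 := fun i j =>
  (g : Matrix (Fin 4) (Fin 4) ℂ).mulVec
    (∑ p, ∑ q,
      (((g⁻¹ : GL4) : Matrix (Fin 4) (Fin 4) ℂ) p i *
       ((g⁻¹ : GL4) : Matrix (Fin 4) (Fin 4) ℂ) q j) • μ p q)

/-- action of `g ∈ GL₄(ℂ)` on a trilinear map:
`(g·τ)(x,y,z) = g τ(g⁻¹x, g⁻¹y, g⁻¹z)`, in structure constants. -/
noncomputable def actTril (g : GL4) (τ : Tril4) : Tril4 := fun i j k =>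
  (g : Matrix (Fin 4) (Fin 4) ℂ).mulVec
    (∑ p, ∑ q, ∑ r,
      (((g⁻¹ : GL4) : Matrix (Fin 4) (Fin 4) ℂ) p i *
       ((g⁻¹ : GL4) : Matrix (Fin 4) (Fin 4) ℂ) q j *
       ((g⁻¹ : GL4) : Matrix (Fin 4) (Fin 4) ℂ) r k) • τ p q r)

/-- `(μ,τ)` degenerates to `(lam,sig)`: there is a curve `g : ℂ∖{0} → GL₄(ℂ)` with
`g(t)·μ → lam` and `g(t)·τ → sig` as `t → 0`. -/
def Degenerates (μ : Bil4) (τ : Tril4) (lam : Bil4) (sig : Tril4) : Prop :=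
  ∃ g : ℂ → GL4,
    Tendsto (fun t => actBil (g t) μ) (𝓝[≠] (0 : ℂ)) (𝓝 lam) ∧
    Tendsto (fun t => actTril (g t) τ) (𝓝[≠] (0 : ℂ)) (𝓝 sig)

noncomputable def μB06 : Bil4 := fun i j =>
  if i = (0 : Fin 4) ∧ j = (1 : Fin 4) then e4 2
  else if i = (1 : Fin 4) ∧ j = (0 : Fin 4) then -(e4 2)
  else if i = (0 : Fin 4) ∧ j = (2 : Fin 4) then e4 3
  else if i = (2 : Fin 4) ∧ j = (0 : Fin 4) then -(e4 3)
  else if i = (1 : Fin 4) ∧ j = (2 : Fin 4) then e4 3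
  else if i = (2 : Fin 4) ∧ j = (1 : Fin 4) then -(e4 3)
  else 0

noncomputable def τB06 (α : ℂ) : Tril4 := fun i j k =>
  if i = (0 : Fin 4) ∧ j = (1 : Fin 4) ∧ k = (2 : Fin 4) then e4 3
  else if i = (1 : Fin 4) ∧ j = (0 : Fin 4) ∧ k = (2 : Fin 4) then -(e4 3)
  else if i = (1 : Fin 4) ∧ j = (2 : Fin 4) ∧ k = (0 : Fin 4) then (α - 1) • e4 3
  else if i = (2 : Fin 4) ∧ j = (1 : Fin 4) ∧ k = (0 : Fin 4) then -((α - 1) • e4 3)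
  else if i = (0 : Fin 4) ∧ j = (2 : Fin 4) ∧ k = (1 : Fin 4) then α • e4 3
  else if i = (2 : Fin 4) ∧ j = (0 : Fin 4) ∧ k = (1 : Fin 4) then -(α • e4 3)
  else 0

noncomputable def μB04 : Bil4 := fun i j =>
  if i = (0 : Fin 4) ∧ j = (1 : Fin 4) then e4 2
  else if i = (1 : Fin 4) ∧ j = (0 : Fin 4) then -(e4 2)
  else 0

noncomputable def τB04 (α : ℂ) : Tril4 := fun i j k =>
  if i = (0 : Fin 4) ∧ j = (1 : Fin 4) ∧ k = (2 : Fin 4) then e4 3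
  else if i = (1 : Fin 4) ∧ j = (0 : Fin 4) ∧ k = (2 : Fin 4) then -(e4 3)
  else if i = (1 : Fin 4) ∧ j = (2 : Fin 4) ∧ k = (0 : Fin 4) then (α - 1) • e4 3
  else if i = (2 : Fin 4) ∧ j = (1 : Fin 4) ∧ k = (0 : Fin 4) then -((α - 1) • e4 3)
  else if i = (0 : Fin 4) ∧ j = (2 : Fin 4) ∧ k = (1 : Fin 4) then α • e4 3
  else if i = (2 : Fin 4) ∧ j = (0 : Fin 4) ∧ k = (1 : Fin 4) then -(α • e4 3)
  else 0

noncomputable def dv (t : ℂ) : Fin 4 → ℂ := ![t, t, t^2, t^4]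
noncomputable def dw (t : ℂ) : Fin 4 → ℂ := ![t⁻¹, t⁻¹, (t^2)⁻¹, (t^4)⁻¹]

lemma dmul (t : ℂ) (h : t ≠ 0) :
    Matrix.diagonal (dv t) * Matrix.diagonal (dw t) = 1 := by
  rw [Matrix.diagonal_mul_diagonal]
  have : (fun i => dv t i * dw t i) = fun _ => (1:ℂ) := by
    funext i; fin_cases i <;> simp [dv, dw] <;> field_simp
  rw [this]; exact Matrix.diagonal_one

lemma dmul' (t : ℂ) (h : t ≠ 0) :
    Matrix.diagonal (dw t) * Matrix.diagonal (dv t) = 1 := by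
  rw [Matrix.diagonal_mul_diagonal]
  have : (fun i => dw t i * dv t i) = fun _ => (1:ℂ) := by
    funext i; fin_cases i <;> simp [dv, dw] <;> field_simp
  rw [this]; exact Matrix.diagonal_one

noncomputable def gu (t : ℂ) (h : t ≠ 0) : GL4 :=
  ⟨Matrix.diagonal (dv t), Matrix.diagonal (dw t), dmul t h, dmul' t h⟩


lemma gu_coe (t : ℂ) (h : t ≠ 0) :
    ((gu t h : GL4) : Matrix (Fin 4) (Fin 4) ℂ) = Matrix.diagonal (dv t) := rfl
lemma gu_inv_coe (t : ℂ) (h : t ≠ 0) :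
    (((gu t h)⁻¹ : GL4) : Matrix (Fin 4) (Fin 4) ℂ) = Matrix.diagonal (dw t) := rfl

lemma actBil_gu (t : ℂ) (h : t ≠ 0) (μ : Bil4) :
    actBil (gu t h) μ = fun i j m => dv t m * (dw t i * dw t j * μ i j m) := by
  funext i j m
  simp only [actBil, gu_coe, gu_inv_coe]
  simp [Matrix.diagonal_apply, ite_mul, zero_mul,
    mul_ite, mul_zero, ite_smul, zero_smul, Finset.sum_ite_eq, Finset.sum_ite_eq',
    Matrix.mulVec_diagonal, mul_assoc]

lemma actTril_gu (t : ℂ) (h : t ≠ 0) (τ : Tril4) :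
    actTril (gu t h) τ = fun i j k m => dv t m * (dw t i * dw t j * dw t k * τ i j k m) := by
  funext i j k m
  simp only [actTril, gu_coe, gu_inv_coe]
  simp [Matrix.diagonal_apply, ite_mul, zero_mul,
    mul_ite, mul_zero, ite_smul, zero_smul, Finset.sum_ite_eq, Finset.sum_ite_eq',
    Matrix.mulVec_diagonal, mul_assoc]

lemma key_bil (t : ℂ) (h : t ≠ 0) :
    actBil (gu t h) μB06 = fun i j => μB04 i j + t • (μB06 i j - μB04 i j) := by
  rw [actBil_gu]
  funext i j m
  fin_cases i <;> fin_cases j <;> fin_cases m <;>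
    simp [μB06, μB04, e4, dv, dw, Pi.single_apply] <;> field_simp <;> ring

set_option maxHeartbeats 2000000 in
lemma key_tril (α t : ℂ) (h : t ≠ 0) :
    actTril (gu t h) (τB06 α) = τB04 α := by
  rw [actTril_gu]
  funext i j k m
  fin_cases i <;> fin_cases j <;> fin_cases k <;> fin_cases m <;>
    simp [τB06, τB04, e4, dv, dw, Pi.single_apply] <;> field_simp <;> ring

/-- for every α, 𝔅₀₆^α degenerates to 𝔅₀₄^α. -/
theorem stmt15 : ∀ α : ℂ, Degenerates μB06 (τB06 α) μB04 (τB04 α) := by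
  intro α
  refine ⟨fun t => if h : t = 0 then 1 else gu t h, ?_, ?_⟩
  · have hcont : Continuous
        (fun t : ℂ => (fun i j => μB04 i j + t • (μB06 i j - μB04 i j) : Bil4)) := by
      refine continuous_pi fun i => continuous_pi fun j => ?_
      exact continuous_const.add (continuous_id.smul continuous_const)
    have h0 : Tendsto (fun t : ℂ => (fun i j => μB04 i j + t • (μB06 i j - μB04 i j) : Bil4))
        (𝓝 0) (𝓝 μB04) := by
      have := hcont.tendsto 0
      simpa using this
    refine (h0.mono_left nhdsWithin_le_nhds).congr' ?_
    filter_upwards [self_mem_nhdsWithin] with t ht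
    have ht' : t ≠ 0 := ht
    rw [dif_neg ht', key_bil t ht']
  · refine (tendsto_const_nhds.congr' ?_ : Tendsto _ _ (𝓝 (τB04 α)))
    filter_upwards [self_mem_nhdsWithin] with t ht
    have ht' : t ≠ 0 := ht
    rw [dif_neg ht', key_tril α t ht']
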